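/- arXiv:0901.3212 — 3 statements merged into one kernel-verified Lean document; each statement's English description precedes it below -/
import Mathlib

section
/- Finite Ramsey theorem: for every triple (k, n, m) of natural numbers there exists a natural number R such that for every set S of size at least R and every coloring of the n-element subsets of S with k colors, there is a subset of S of size m all of whose n-element subsets receive the same color. -/
/-!
Induction on the dimension `n`, after ordering the ground set linearly. Taking the least
element `a` of `S` and a monochromatic set for the colouring `s ↦ c (insert a s)` of the
`n`-subsets of the rest, and repeating inside that set, produces a large set on which the colour
of an `(n+1)`-subset depends only on its least element. Pigeonholing this colour over a set of
size `k m + 1` leaves `m` elements all of whose `(n+1)`-subsets have the same colour.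
-/

open Finset Function

variable {α κ : Type*}

def IsMonochromatic (c : Finset α → κ) (n : ℕ) (T : Finset α) : Prop :=
  ∃ x, ∀ t ⊆ T, #t = n → c t = x

def IsMinHomogeneous [LinearOrder α] (c : Finset α → κ) (n : ℕ) (T : Finset α) : Prop :=
  ∃ f : α → κ, ∀ t ⊆ T, #t = n → ∀ a, IsLeast (t : Set α) a → c t = f a

/-- `ramseyBound k (n + 1) m` is `D (k * m + 1)`, where `D j` is the size of a set guaranteed
to contain a min-homogeneous set of size `j`: `D 0 = 0`, `D (j + 1) = ramseyBound k n (D j) + 1`. -/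
def ramseyBound (k : ℕ) : ℕ → ℕ → ℕ
  | 0, m => m
  | n + 1, m => (fun r => ramseyBound k n r + 1)^[k * m + 1] 0

theorem isMonochromatic_zero (c : Finset α → κ) (T : Finset α) : IsMonochromatic c 0 T :=
  ⟨c ∅, fun _ _ ht => by rw [card_eq_zero.mp ht]⟩

theorem IsMonochromatic.mono {c : Finset α → κ} {n : ℕ} {T T' : Finset α}
    (h : IsMonochromatic c n T) (hT' : T' ⊆ T) : IsMonochromatic c n T' :=
  let ⟨x, hx⟩ := h
  ⟨x, fun t ht => hx t (ht.trans hT')⟩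

section LinearOrder

variable [LinearOrder α]

theorem IsMinHomogeneous.insert {c : Finset α → κ} {n : ℕ} {T : Finset α} {a : α}
    (hT : IsMinHomogeneous c (n + 1) T) (ha : ∀ b ∈ T, a < b)
    (hlink : IsMonochromatic (fun s => c (insert a s)) n T) :
    IsMinHomogeneous c (n + 1) (insert a T) := by
  obtain ⟨f, hf⟩ := hT
  obtain ⟨x, hx⟩ := hlink
  refine ⟨update f a x, fun t ht hcard b hb => ?_⟩
  by_cases hat : a ∈ t
  · have hba : b = a := by
      rcases mem_insert.mp (ht hb.1) with hba | hbT
      · exact hba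
      · exact absurd (hb.2 hat) (ha b hbT).not_ge
    have hrest : #(t.erase a) = n := by rw [card_erase_of_mem hat, hcard]; rfl
    rw [hba, update_self, ← insert_erase hat]
    exact hx _ (subset_insert_iff.mp ht) hrest
  · have hbT : b ≠ a := fun hba => hat (hba ▸ hb.1)
    rw [update_of_ne hbT]
    exact hf t ((subset_insert_iff_of_notMem hat).mp ht) hcard b hb

theorem exists_isMinHomogeneous {n : ℕ} {r : ℕ → ℕ}
    (hr : ∀ m (S : Finset α), r m ≤ #S → ∀ c : Finset α → κ,
      ∃ T ⊆ S, #T = m ∧ IsMonochromatic c n T)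
    (j : ℕ) (S : Finset α) (hS : (fun i => r i + 1)^[j] 0 ≤ #S) (c : Finset α → κ) :
    ∃ T ⊆ S, #T = j ∧ IsMinHomogeneous c (n + 1) T := by
  induction j generalizing S with
  | zero =>
    refine ⟨∅, empty_subset S, rfl, fun _ => c ∅, fun t ht hcard => ?_⟩
    simp [subset_empty.mp ht] at hcard
  | succ j ih =>
    rw [iterate_succ_apply'] at hS
    have hSne : S.Nonempty := card_pos.mp (by omega)
    set a := S.min' hSne
    have hrest : r ((fun i => r i + 1)^[j] 0) ≤ #(S.erase a) := by
      rw [card_erase_of_mem (S.min'_mem hSne)]; omega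
    obtain ⟨T', hT'S, hT'card, hT'mono⟩ := hr _ _ hrest (fun s => c (insert a s))
    obtain ⟨T, hTT', hTcard, hTmin⟩ := ih T' hT'card.ge
    have haT : ∀ b ∈ T, a < b := fun b hb =>
      S.min'_lt_of_mem_erase_min' hSne (hT'S (hTT' hb))
    have hTS : T ⊆ S := hTT'.trans (hT'S.trans (erase_subset a S))
    refine ⟨insert a T, insert_subset (S.min'_mem hSne) hTS, ?_,
      hTmin.insert haT (hT'mono.mono hTT')⟩
    rw [card_insert_of_notMem fun haT' => (haT a haT').false, hTcard]

theorem IsMinHomogeneous.exists_isMonochromatic [Fintype κ] {c : Finset α → κ} {n m : ℕ}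
    {T : Finset α} (h : IsMinHomogeneous c (n + 1) T) (hT : Fintype.card κ * m < #T) :
    ∃ T' ⊆ T, #T' = m ∧ IsMonochromatic c (n + 1) T' := by
  classical
  obtain ⟨f, hf⟩ := h
  obtain ⟨x, -, hx⟩ := exists_lt_card_fiber_of_mul_lt_card_of_maps_to
    (fun a _ => mem_univ (f a)) (by rwa [card_univ])
  obtain ⟨T', hT'x, hT'card⟩ := exists_subset_card_eq hx.le
  refine ⟨T', hT'x.trans (filter_subset _ T), hT'card, x, fun t ht hcard => ?_⟩
  have htne : t.Nonempty := card_pos.mp (by omega)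
  rw [hf t (ht.trans (hT'x.trans (filter_subset _ T))) hcard _ (t.isLeast_min' htne)]
  exact (mem_filter.mp (hT'x (ht (t.min'_mem htne)))).2

theorem exists_isMonochromatic_of_ramseyBound_le [Fintype κ] (n m : ℕ) (S : Finset α)
    (hS : ramseyBound (Fintype.card κ) n m ≤ #S) (c : Finset α → κ) :
    ∃ T ⊆ S, #T = m ∧ IsMonochromatic c n T := by
  induction n generalizing m S c with
  | zero =>
    obtain ⟨T, hTS, hTcard⟩ := exists_subset_card_eq hS
    exact ⟨T, hTS, hTcard, isMonochromatic_zero c T⟩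
  | succ n ih =>
    obtain ⟨T, hTS, hTcard, hTmin⟩ := exists_isMinHomogeneous ih _ S hS c
    obtain ⟨T', hT'T, hT'card, hT'mono⟩ := hTmin.exists_isMonochromatic (m := m) (by omega)
    exact ⟨T', hT'T.trans hTS, hT'card, hT'mono⟩

end LinearOrder

/-- **Finite Ramsey Theorem.** For every triple `(k, n, m)` of natural numbers there is
a number `R` such that whenever the `n`-element subsets of a set of size at least `R`
are painted in `k` colors, there is a subset of size `m` all of whose `n`-element
subsets receive the same color. -/
theorem finite_ramsey (k n m : ℕ) :
    ∃ R : ℕ, ∀ (α : Type) (S : Finset α), R ≤ S.card →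
      ∀ c : Finset α → Fin k,
        ∃ T : Finset α, T ⊆ S ∧ T.card = m ∧
          ∀ t₁ : Finset α, t₁ ⊆ T → t₁.card = n →
            ∀ t₂ : Finset α, t₂ ⊆ T → t₂.card = n → c t₁ = c t₂ := by
  refine ⟨ramseyBound k n m, fun α S hS c => ?_⟩
  let : LinearOrder α := IsWellOrder.linearOrder WellOrderingRel
  obtain ⟨T, hTS, hTcard, x, hx⟩ :=
    exists_isMonochromatic_of_ramseyBound_le n m S (by rwa [Fintype.card_fin]) c
  exact ⟨T, hTS, hTcard, fun t₁ ht₁ h₁ t₂ ht₂ h₂ =>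
    (hx t₁ ht₁ h₁).trans (hx t₂ ht₂ h₂).symm⟩
end

section
/- If relations R and S on A × B are both stable relative to (A, B), then the conjunction R ∧ S is stable relative to (A, B). -/
/-- A relation `R ⊆ A × B` has the `m`-order property if there exist sequences
`a_1, ..., a_m ∈ A` and `b_1, ..., b_m ∈ B` with `R (a i) (b j)` iff `i ≤ j`. -/
def HasOrderProp {A B : Type*} (R : A → B → Prop) (m : ℕ) : Prop :=
  ∃ (a : Fin m → A) (b : Fin m → B), ∀ i j, R (a i) (b j) ↔ i ≤ j

/-- `R` is stable relative to `(A, B)`: there is a finite bound on the `m` for which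
the `m`-order property holds. -/
def IsStableRel {A B : Type*} (R : A → B → Prop) : Prop :=
  ∃ n : ℕ, ∀ m, HasOrderProp R m → m ≤ n

/-- Two-color finite Ramsey theorem on subsets of ℕ. -/
lemma ramsey_aux : ∀ (n s t : ℕ), s + t ≤ n → ∀ (c : ℕ → ℕ → Bool) (T : Finset ℕ),
    (s + t).choose s ≤ T.card →
    (∃ U, U ⊆ T ∧ U.card = s ∧ ∀ i ∈ U, ∀ j ∈ U, i < j → c i j = true) ∨
    (∃ U, U ⊆ T ∧ U.card = t ∧ ∀ i ∈ U, ∀ j ∈ U, i < j → c i j = false) := by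
  intro n
  induction n with
  | zero =>
    intro s t hst c T hT
    left
    exact ⟨∅, Finset.empty_subset _, by simp; omega, by simp⟩
  | succ n ih =>
    intro s t hst c T hT
    match s, t with
    | 0, t => exact Or.inl ⟨∅, Finset.empty_subset _, rfl, by simp⟩
    | s+1, 0 => exact Or.inr ⟨∅, Finset.empty_subset _, rfl, by simp⟩
    | s+1, t+1 =>
      have hTne : T.Nonempty := by
        rw [← Finset.card_pos]
        have := Nat.choose_pos (show s+1 ≤ (s+1)+(t+1) by omega)
        omega
      set v := T.min' hTne with hv
      have hvT : v ∈ T := T.min'_mem hTne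
      set T₁ := (T.erase v).filter (fun j => c v j = true) with hT1
      set T₂ := (T.erase v).filter (fun j => c v j ≠ true) with hT2
      have hsplit : T₁.card + T₂.card = (T.erase v).card :=
        Finset.card_filter_add_card_filter_not _
      have hec : (T.erase v).card = T.card - 1 := Finset.card_erase_of_mem hvT
      have hpas : ((s+1) + (t+1)).choose (s+1)
          = ((s + (t+1)).choose s) + (((s+1) + t).choose (s+1)) := by
        have := Nat.choose_succ_succ ((s+1)+t) s
        rw [show (s+1)+(t+1) = ((s+1)+t)+1 by omega, this]
        congr 1
        · congr 1; omega
      have hcases : (s + (t+1)).choose s ≤ T₁.card ∨ ((s+1) + t).choose (s+1) ≤ T₂.card := by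
        omega
      have hvlt : ∀ j ∈ T.erase v, v < j := by
        intro j hj
        have h1 := T.min'_le j (Finset.mem_of_mem_erase hj)
        have h2 := Finset.ne_of_mem_erase hj
        omega
      rcases hcases with h1 | h2
      · rcases ih s (t+1) (by omega) c T₁ h1 with ⟨U, hUs, hUc, hUm⟩ | ⟨U, hUs, hUc, hUm⟩
        · left
          have hvU : v ∉ U := fun h => absurd rfl (Finset.ne_of_mem_erase
            (Finset.mem_of_mem_filter _ (hUs h)))
          refine ⟨insert v U, ?_, ?_, ?_⟩
          · intro x hx
            rcases Finset.mem_insert.mp hx with rfl | hx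
            · exact hvT
            · exact Finset.mem_of_mem_erase (Finset.mem_of_mem_filter _ (hUs hx))
          · rw [Finset.card_insert_of_notMem hvU, hUc]
          · intro i hi j hj hij
            rcases Finset.mem_insert.mp hi with rfl | hi
            · rcases Finset.mem_insert.mp hj with rfl | hj
              · omega
              · exact (Finset.mem_filter.mp (hUs hj)).2
            · rcases Finset.mem_insert.mp hj with rfl | hj
              · have := hvlt i (Finset.mem_of_mem_filter _ (hUs hi)); omega
              · exact hUm i hi j hj hij
        · right
          exact ⟨U, fun x hx => Finset.mem_of_mem_erase
            (Finset.mem_of_mem_filter _ (hUs hx)), hUc, hUm⟩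
      · rcases ih (s+1) t (by omega) c T₂ h2 with ⟨U, hUs, hUc, hUm⟩ | ⟨U, hUs, hUc, hUm⟩
        · left
          exact ⟨U, fun x hx => Finset.mem_of_mem_erase
            (Finset.mem_of_mem_filter _ (hUs hx)), hUc, hUm⟩
        · right
          have hvU : v ∉ U := fun h => absurd rfl (Finset.ne_of_mem_erase
            (Finset.mem_of_mem_filter _ (hUs h)))
          refine ⟨insert v U, ?_, ?_, ?_⟩
          · intro x hx
            rcases Finset.mem_insert.mp hx with rfl | hx
            · exact hvT
            · exact Finset.mem_of_mem_erase (Finset.mem_of_mem_filter _ (hUs hx))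
          · rw [Finset.card_insert_of_notMem hvU, hUc]
          · intro i hi j hj hij
            rcases Finset.mem_insert.mp hi with rfl | hi
            · rcases Finset.mem_insert.mp hj with rfl | hj
              · omega
              · simpa using (Finset.mem_filter.mp (hUs hj)).2
            · rcases Finset.mem_insert.mp hj with rfl | hj
              · have := hvlt i (Finset.mem_of_mem_filter _ (hUs hi)); omega
              · exact hUm i hi j hj hij

/-- If `R` and `S` are stable relative to `(A, B)`, then so is their conjunction. -/
theorem and_stable_of_stable {A B : Type*} (R S : A → B → Prop)
    (hR : IsStableRel R) (hS : IsStableRel S) :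
    IsStableRel (fun a b => R a b ∧ S a b) := by
  classical
  obtain ⟨nR, hR⟩ := hR
  obtain ⟨nS, hS⟩ := hS
  refine ⟨((nR+1) + (nS+1)).choose (nR+1), ?_⟩
  intro m hm
  by_contra hlt
  push_neg at hlt
  obtain ⟨a, b, hab⟩ := hm
  have hm0 : 0 < m := by omega
  set f : ℕ → Fin m := fun i => ⟨i % m, Nat.mod_lt _ hm0⟩ with hfdef
  have hf : ∀ {x y : ℕ}, x ≤ y → y < m → f x ≤ f y := by
    intro x y hxy hy
    show x % m ≤ y % m
    rw [Nat.mod_eq_of_lt hy, Nat.mod_eq_of_lt (by omega)]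
    exact hxy
  have hf' : ∀ {x y : ℕ}, x < y → y < m → f x < f y := by
    intro x y hxy hy
    show x % m < y % m
    rw [Nat.mod_eq_of_lt hy, Nat.mod_eq_of_lt (by omega)]
    exact hxy
  set c : ℕ → ℕ → Bool := fun i j => decide (¬ R (a (f j)) (b (f i))) with hc
  have := ramsey_aux ((nR+1)+(nS+1)) (nR+1) (nS+1) le_rfl c (Finset.range m)
    (by rw [Finset.card_range]; omega)
  rcases this with ⟨U, hUT, hUc, hU⟩ | ⟨U, hUT, hUc, hU⟩
  · -- true clique: R fails on all pairs ⇒ R has order property nR+1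
    set e := U.orderIsoOfFin hUc with he
    have hmem : ∀ p : Fin (nR+1), ((e p : ℕ)) ∈ U := fun p => (e p).2
    have hltm : ∀ p : Fin (nR+1), ((e p : ℕ)) < m := fun p =>
      Finset.mem_range.mp (hUT (hmem p))
    refine absurd (hR (nR+1) ⟨fun p => a (f (e p)), fun q => b (f (e q)), ?_⟩) (by omega)
    intro p q
    constructor
    · intro h
      by_contra hpq
      push_neg at hpq
      have hlt' : ((e q : ℕ)) < (e p : ℕ) := by
        exact_mod_cast e.strictMono hpq
      have := hU _ (hmem q) _ (hmem p) hlt'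
      rw [hc] at this
      simp only [decide_eq_true_eq] at this
      exact this h
    · intro hpq
      have := (hab (f (e p)) (f (e q))).mpr (hf (by exact_mod_cast e.monotone hpq) (hltm q))
      exact this.1
  · -- false clique: R holds but conjunction fails ⇒ S fails ⇒ S has order property nS+1
    set e := U.orderIsoOfFin hUc with he
    have hmem : ∀ p : Fin (nS+1), ((e p : ℕ)) ∈ U := fun p => (e p).2
    have hltm : ∀ p : Fin (nS+1), ((e p : ℕ)) < m := fun p =>
      Finset.mem_range.mp (hUT (hmem p))
    refine absurd (hS (nS+1) ⟨fun p => a (f (e p)), fun q => b (f (e q)), ?_⟩) (by omega)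
    intro p q
    constructor
    · intro h
      by_contra hpq
      push_neg at hpq
      have hlt' : ((e q : ℕ)) < (e p : ℕ) := by
        exact_mod_cast e.strictMono hpq
      have h1 := hU _ (hmem q) _ (hmem p) hlt'
      rw [hc] at h1
      simp only [decide_eq_false_iff_not, not_not] at h1
      have h2 : ¬ (R (a (f (e p))) (b (f (e q))) ∧ S (a (f (e p))) (b (f (e q)))) := by
        intro hcon
        have := (hab (f (e p)) (f (e q))).mp hcon
        exact absurd (hf' hlt' (hltm p)) (not_lt.mpr this)
      exact h2 ⟨h1, h⟩
    · intro hpq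
      have := (hab (f (e p)) (f (e q))).mpr (hf (by exact_mod_cast e.monotone hpq) (hltm q))
      exact this.2
end

section
/- Stable relations relative to (A, B) are closed under all Boolean combinations: if R and S are stable relative to (A, B), then so are ¬R, R ∨ S, R ∧ S, and R → S (as relations on A × B). -/
/-- Finite Ramsey theorem for pairs with two colours, over finite sets of naturals. -/
theorem ramsey_pairs : ∀ s t : ℕ, ∃ n : ℕ, ∀ (V : Finset ℕ) (f : ℕ → ℕ → Bool),
    n ≤ V.card →
    (∃ H : Finset ℕ, H ⊆ V ∧ s ≤ H.card ∧ ∀ i ∈ H, ∀ j ∈ H, i < j → f i j = true) ∨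
    (∃ H : Finset ℕ, H ⊆ V ∧ t ≤ H.card ∧ ∀ i ∈ H, ∀ j ∈ H, i < j → f i j = false) := by
  intro s
  induction s with
  | zero =>
    intro t
    exact ⟨0, fun V f _ => Or.inl ⟨∅, by simp⟩⟩
  | succ s ihs =>
    intro t
    induction t with
    | zero =>
      exact ⟨0, fun V f _ => Or.inr ⟨∅, by simp⟩⟩
    | succ t iht =>
      obtain ⟨n₁, h₁⟩ := ihs (t + 1)
      obtain ⟨n₂, h₂⟩ := iht
      refine ⟨n₁ + n₂ + 1, fun V f hV => ?_⟩
      have hne : V.Nonempty := Finset.card_pos.mp (by omega)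
      set v := V.min' hne with hv
      have hvV : v ∈ V := V.min'_mem hne
      have hvmin : ∀ x ∈ V, v ≤ x := fun x hx => V.min'_le x hx
      set W := V.erase v with hW
      have hWcard : W.card = V.card - 1 := Finset.card_erase_of_mem hvV
      classical
      set T := W.filter (fun j => f v j = true) with hT
      set F := W.filter (fun j => ¬ (f v j = true)) with hF
      have hTF : T.card + F.card = W.card := Finset.card_filter_add_card_filter_not _
      have hcases : n₁ ≤ T.card ∨ n₂ ≤ F.card := by omega
      have hTV : T ⊆ V := (Finset.filter_subset _ _).trans (Finset.erase_subset _ _)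
      have hFV : F ⊆ V := (Finset.filter_subset _ _).trans (Finset.erase_subset _ _)
      -- helper facts
      have hins : ∀ (H : Finset ℕ), H ⊆ W → ∀ i ∈ insert v H, ∀ j ∈ insert v H, i < j →
          (i = v ∧ j ∈ H) ∨ (i ∈ H ∧ j ∈ H) := by
        intro H hHW i hi j hj hij
        have hjv : j ≠ v := by
          intro hjv
          rcases Finset.mem_insert.mp hi with h | h
          · omega
          · have := hvmin i ((hHW.trans (Finset.erase_subset _ _)) h); omega
        have hj' : j ∈ H := (Finset.mem_insert.mp hj).resolve_left hjv
        rcases Finset.mem_insert.mp hi with h | h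
        · exact Or.inl ⟨h, hj'⟩
        · exact Or.inr ⟨h, hj'⟩
      rcases hcases with hc | hc
      · rcases h₁ T f hc with ⟨H, hHT, hcard, hmono⟩ | ⟨H, hHT, hcard, hmono⟩
        · -- extend true-homogeneous set with v
          have hHW : H ⊆ W := hHT.trans (Finset.filter_subset _ _)
          have hvH : v ∉ H := fun h => (Finset.mem_erase.mp (hHW h)).1 rfl
          refine Or.inl ⟨insert v H, ?_, ?_, ?_⟩
          · intro x hx
            rcases Finset.mem_insert.mp hx with h | h
            · exact h ▸ hvV
            · exact hTV (hHT h)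
          · rw [Finset.card_insert_of_notMem hvH]; omega
          · intro i hi j hj hij
            rcases hins H hHW i hi j hj hij with ⟨hiv, hjH⟩ | ⟨hiH, hjH⟩
            · subst hiv
              exact (Finset.mem_filter.mp (hHT hjH)).2
            · exact hmono i hiH j hjH hij
        · exact Or.inr ⟨H, hHT.trans hTV, hcard, hmono⟩
      · rcases h₂ F f hc with ⟨H, hHT, hcard, hmono⟩ | ⟨H, hHT, hcard, hmono⟩
        · exact Or.inl ⟨H, hHT.trans hFV, hcard, hmono⟩
        · have hHW : H ⊆ W := hHT.trans (Finset.filter_subset _ _)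
          have hvH : v ∉ H := fun h => (Finset.mem_erase.mp (hHW h)).1 rfl
          refine Or.inr ⟨insert v H, ?_, ?_, ?_⟩
          · intro x hx
            rcases Finset.mem_insert.mp hx with h | h
            · exact h ▸ hvV
            · exact hFV (hHT h)
          · rw [Finset.card_insert_of_notMem hvH]; omega
          · intro i hi j hj hij
            rcases hins H hHW i hi j hj hij with ⟨hiv, hjH⟩ | ⟨hiH, hjH⟩
            · subst hiv
              have := (Finset.mem_filter.mp (hHT hjH)).2
              simpa using this
            · exact hmono i hiH j hjH hij

theorem isStableRel_congr {A B : Type*} {R R' : A → B → Prop}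
    (h : ∀ a b, R a b ↔ R' a b) (hR : IsStableRel R) : IsStableRel R' := by
  obtain ⟨n, hn⟩ := hR
  exact ⟨n, fun m ⟨a, b, hab⟩ => hn m ⟨a, b, fun i j => (h _ _).trans (hab i j)⟩⟩

theorem isStableRel_not {A B : Type*} {R : A → B → Prop} (hR : IsStableRel R) :
    IsStableRel (fun a b => ¬ R a b) := by
  obtain ⟨n, hn⟩ := hR
  refine ⟨n + 1, fun m hm => ?_⟩
  match m, hm with
  | 0, _ => omega
  | (k + 1), ⟨a, b, hab⟩ =>
    have hk : HasOrderProp R k := by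
      refine ⟨fun i => a ⟨k - i, by omega⟩, fun j => b ⟨k - 1 - j, by omega⟩, fun i j => ?_⟩
      have hi := i.isLt
      have hj := j.isLt
      have h := hab ⟨k - i, by omega⟩ ⟨k - 1 - j, by omega⟩
      rw [Fin.mk_le_mk] at h
      simp only at h
      rw [Fin.le_def]
      constructor
      · intro hr
        by_contra hle
        push_neg at hle
        exact (h.mpr (by omega)) hr
      · intro hle
        by_contra hr
        have := h.mp hr
        omega
    have := hn k hk
    omega

theorem isStableRel_or {A B : Type*} {R S : A → B → Prop}
    (hR : IsStableRel R) (hS : IsStableRel S) : IsStableRel (fun a b => R a b ∨ S a b) := by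
  classical
  obtain ⟨nR, hnR⟩ := hR
  obtain ⟨nS, hnS⟩ := hS
  set k := max nR nS + 1 with hk
  obtain ⟨n, hn⟩ := ramsey_pairs (2 * k) (2 * k)
  refine ⟨n, fun m hm => ?_⟩
  by_contra hlt
  push_neg at hlt
  obtain ⟨a, b, hab⟩ := hm
  set f : ℕ → ℕ → Bool := fun i j =>
    if h : i < m ∧ j < m then decide (R (a ⟨i, h.1⟩) (b ⟨j, h.2⟩)) else true with hf
  have hcard : n ≤ (Finset.range m).card := by simp; omega
  rcases hn (Finset.range m) f hcard with ⟨H, hHV, hHcard, hmono⟩ | ⟨H, hHV, hHcard, hmono⟩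
  · -- R has the k-order property
    set g := H.orderEmbOfCardLe hHcard with hg
    have hgmem : ∀ i, (g i : ℕ) ∈ H := fun i => H.orderEmbOfCardLe_mem hHcard i
    have hgm : ∀ i, (g i : ℕ) < m := fun i => Finset.mem_range.mp (hHV (hgmem i))
    have hR' : HasOrderProp R k := by
      refine ⟨fun s => a ⟨g ⟨2 * s, by omega⟩, hgm _⟩,
              fun t => b ⟨g ⟨2 * t + 1, by omega⟩, hgm _⟩, fun s t => ?_⟩
      rw [Fin.le_def]
      constructor
      · intro hr
        by_contra hle
        push_neg at hle
        -- t < s : indices reversed, so ¬(R ∨ S), contradiction with hr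
        have hlt2 : g ⟨2 * t + 1, by omega⟩ < g ⟨2 * s, by omega⟩ :=
          g.strictMono (by simp [Fin.lt_def]; omega)
        have := (hab ⟨g ⟨2 * s, by omega⟩, hgm _⟩ ⟨g ⟨2 * t + 1, by omega⟩, hgm _⟩)
        have hnor : ¬ (g ⟨2 * s, by omega⟩ ≤ g ⟨2 * t + 1, by omega⟩) := not_le.mpr hlt2
        exact (this.not.mpr (by rw [Fin.le_def]; exact_mod_cast hnor)) (Or.inl hr)
      · intro hst
        have hlt2 : g ⟨2 * s, by omega⟩ < g ⟨2 * t + 1, by omega⟩ :=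
          g.strictMono (by simp [Fin.lt_def]; omega)
        have hfval := hmono _ (hgmem ⟨2 * s, by omega⟩) _ (hgmem ⟨2 * t + 1, by omega⟩)
          (by exact_mod_cast hlt2)
        rw [hf] at hfval
        simp only [hgm, and_self, dif_pos, decide_eq_true_eq] at hfval
        exact hfval
    have := hnR k hR'
    omega
  · -- S has the k-order property
    set g := H.orderEmbOfCardLe hHcard with hg
    have hgmem : ∀ i, (g i : ℕ) ∈ H := fun i => H.orderEmbOfCardLe_mem hHcard i
    have hgm : ∀ i, (g i : ℕ) < m := fun i => Finset.mem_range.mp (hHV (hgmem i))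
    have hS' : HasOrderProp S k := by
      refine ⟨fun s => a ⟨g ⟨2 * s, by omega⟩, hgm _⟩,
              fun t => b ⟨g ⟨2 * t + 1, by omega⟩, hgm _⟩, fun s t => ?_⟩
      rw [Fin.le_def]
      constructor
      · intro hr
        by_contra hle
        push_neg at hle
        have hlt2 : g ⟨2 * t + 1, by omega⟩ < g ⟨2 * s, by omega⟩ :=
          g.strictMono (by simp [Fin.lt_def]; omega)
        have := (hab ⟨g ⟨2 * s, by omega⟩, hgm _⟩ ⟨g ⟨2 * t + 1, by omega⟩, hgm _⟩)
        have hnor : ¬ (g ⟨2 * s, by omega⟩ ≤ g ⟨2 * t + 1, by omega⟩) := not_le.mpr hlt2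
        exact (this.not.mpr (by rw [Fin.le_def]; exact_mod_cast hnor)) (Or.inr hr)
      · intro hst
        have hlt2 : g ⟨2 * s, by omega⟩ < g ⟨2 * t + 1, by omega⟩ :=
          g.strictMono (by simp [Fin.lt_def]; omega)
        have hfval := hmono _ (hgmem ⟨2 * s, by omega⟩) _ (hgmem ⟨2 * t + 1, by omega⟩)
          (by exact_mod_cast hlt2)
        rw [hf] at hfval
        simp only [hgm, and_self, dif_pos, decide_eq_false_iff_not] at hfval
        -- hfval : ¬ R …, but R ∨ S holds since indices are ordered
        have hor := (hab ⟨g ⟨2 * s, by omega⟩, hgm _⟩ ⟨g ⟨2 * t + 1, by omega⟩, hgm _⟩).mpr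
          (by rw [Fin.le_def]; exact_mod_cast hlt2.le)
        exact hor.resolve_left hfval
    have := hnS k hS'
    omega

/-- Stable relations relative to `(A, B)` are closed under all Boolean combinations:
negation, disjunction, conjunction, and implication. -/
theorem boolean_combinations_stable {A B : Type*} (R S : A → B → Prop)
    (hR : IsStableRel R) (hS : IsStableRel S) :
    IsStableRel (fun a b => ¬ R a b) ∧
    IsStableRel (fun a b => R a b ∨ S a b) ∧
    IsStableRel (fun a b => R a b ∧ S a b) ∧
    IsStableRel (fun a b => R a b → S a b) := by
  refine ⟨isStableRel_not hR, isStableRel_or hR hS, ?_, ?_⟩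
  · exact isStableRel_congr (fun a b => by tauto)
      (isStableRel_not (isStableRel_or (isStableRel_not hR) (isStableRel_not hS)))
  · exact isStableRel_congr (fun a b => by tauto)
      (isStableRel_or (isStableRel_not hR) hS)
end
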